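/- Let G be a discrete group with length function ℓ satisfying a Haagerup inequality with constants C, k. For t > 0 and n ∈ ℕ, define φ_{n,t}(g) = e^{-t·ℓ(g)} if ℓ(g) ≤ n and 0 otherwise. Then for every f with λ(f) bounded on ℓ²(G): ‖λ(φ_{n,t}·f) - λ(e^{-t·ℓ}·f)‖ ≤ C·(sup_{m > n} e^{-t·m}(1+m)^k)·‖λ(f)‖, and this supremum tends to 0 as n → ∞ for fixed t > 0. -/

import Mathlib

/-!
`Tnt - Tt` is convolution by `u = (φ_{n,t} - e^{-tℓ}) f`, which vanishes where `ℓ ≤ n` and equals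
`-e^{-tℓ} f` elsewhere, so `|u| (1 + ℓ)^k ≤ S |f|` pointwise, `S` being the tail supremum.
The Haagerup inequality bounds the convolution operators of the finite truncations of `u` by
`C S ‖f‖₂ ≤ C S ‖λ(f)‖` (as `f = λ(f) δ₁`), and these operators converge to `Tnt - Tt`
pointwise on `ℓ²(G)`, so the bound passes to the limit. The supremum tends to `0` because
`e^{-tm} (1 + m)^k` does.
-/

open Filter

/-- `T` is the convolution operator `λ(f)` on `ℓ²(G)`: `(T h)(y) = ∑_x f(x) h(x⁻¹ y)`. -/
def IsConvOp {G : Type*} [Group G] (f : G → ℂ)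
    (T : lp (fun _ : G => ℂ) 2 →L[ℂ] lp (fun _ : G => ℂ) 2) : Prop :=
  ∀ (h : lp (fun _ : G => ℂ) 2) (y : G), T h y = ∑' x : G, f x * h (x⁻¹ * y)

open scoped ENNReal Topology lp

theorem Memℓp.comp_equiv {α E : Type*} [NormedAddCommGroup E] {p : ℝ≥0∞} {f : α → E}
    (hf : Memℓp f p) (e : α ≃ α) : Memℓp (f ∘ e) p := by
  rcases p.trichotomy with rfl | rfl | hp
  · exact memℓp_zero ((memℓp_zero_iff.1 hf).preimage e.injective.injOn)
  · exact memℓp_infty (by convert hf.bddAbove using 1; exact e.surjective.range_comp (‖f ·‖))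
  · exact memℓp_gen ((e.summable_iff (f := fun i => ‖f i‖ ^ p.toReal)).2 (hf.summable hp))

section Convolution

variable {G : Type*} [Group G]

noncomputable def lpTranslate (x : G) : ℓ²(G, ℂ) →L[ℂ] ℓ²(G, ℂ) :=
  LinearMap.mkContinuous
    { toFun := fun h => ⟨fun y => h (x⁻¹ * y), (lp.memℓp h).comp_equiv (Equiv.mulLeft x⁻¹)⟩
      map_add' := fun _ _ => rfl
      map_smul' := fun _ _ => rfl }
    1 fun h => by
      rw [one_mul, lp.norm_eq_tsum_rpow (by norm_num), lp.norm_eq_tsum_rpow (by norm_num) h]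
      exact le_of_eq (congrArg (· ^ _) ((Equiv.mulLeft x⁻¹).tsum_eq (‖h ·‖ ^ _)))

@[simp] theorem lpTranslate_apply (x : G) (h : ℓ²(G, ℂ)) (y : G) :
    lpTranslate x h y = h (x⁻¹ * y) := rfl

noncomputable def finConvOp (u : G → ℂ) (F : Finset G) : ℓ²(G, ℂ) →L[ℂ] ℓ²(G, ℂ) :=
  ∑ x ∈ F, u x • lpTranslate x

theorem finConvOp_apply (u : G → ℂ) (F : Finset G) (h : ℓ²(G, ℂ)) (y : G) :
    finConvOp u F h y = ∑ x ∈ F, u x * h (x⁻¹ * y) := by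
  simp only [finConvOp, sum_apply, smul_apply, lp.coeFn_sum, lp.coeFn_smul, Finset.sum_apply,
    Pi.smul_apply, smul_eq_mul, lpTranslate_apply]

theorem isConvOp_finConvOp (u : G → ℂ) (F : Finset G) :
    IsConvOp ((F : Set G).indicator u) (finConvOp u F) := by
  intro h y
  rw [finConvOp_apply, tsum_eq_sum (s := F) fun x hx => by simp [hx]]
  exact Finset.sum_congr rfl fun x hx => by simp [hx]

theorem summable_mul_apply_inv_mul {u : G → ℂ} (hu : Memℓp u 2) (h : ℓ²(G, ℂ)) (y : G) :
    Summable fun x => u x * h (x⁻¹ * y) := by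
  let h' : ℓ²(G, ℂ) :=
    ⟨fun x => h (x⁻¹ * y), (lp.memℓp h).comp_equiv ((Equiv.inv G).trans (Equiv.mulRight y))⟩
  refine .of_norm ?_
  simpa only [norm_mul] using lp.summable_mul (by norm_num [Real.HolderConjugate.two_two])
    (⟨u, hu⟩ : ℓ²(G, ℂ)) h'

variable {u v : G → ℂ} {T S : ℓ²(G, ℂ) →L[ℂ] ℓ²(G, ℂ)}

theorem IsConvOp.coeFn_apply_single_one [DecidableEq G] (hT : IsConvOp u T) :
    ⇑(T (lp.single 2 1 1)) = u := by
  ext x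
  rw [hT, tsum_eq_single x fun g hg => by
    rw [lp.single_apply_ne _ _ _ (by simpa [inv_mul_eq_one] using hg), mul_zero]]
  rw [inv_mul_cancel, lp.single_apply_self, mul_one]

theorem IsConvOp.memℓp (hT : IsConvOp u T) : Memℓp u 2 := by
  classical
  exact hT.coeFn_apply_single_one ▸ lp.memℓp _

theorem IsConvOp.sum_norm_sq_le (hT : IsConvOp u T) (F : Finset G) :
    ∑ g ∈ F, ‖u g‖ ^ 2 ≤ ‖T‖ ^ 2 := by
  classical
  have hsingle : ‖T (lp.single 2 1 1)‖ ≤ ‖T‖ := by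
    simpa [lp.norm_single] using T.le_opNorm (lp.single 2 (1 : G) (1 : ℂ))
  have := lp.sum_rpow_le_norm_rpow (by norm_num) (T (lp.single 2 1 1)) F
  simp only [hT.coeFn_apply_single_one, ENNReal.toReal_ofNat, Real.rpow_two] at this
  exact this.trans (pow_le_pow_left₀ (norm_nonneg _) hsingle 2)

theorem IsConvOp.sub (hT : IsConvOp u T) (hS : IsConvOp v S) : IsConvOp (u - v) (T - S) := by
  intro h y
  rw [sub_apply, lp.coeFn_sub, Pi.sub_apply, hT, hS,
    ← (summable_mul_apply_inv_mul hT.memℓp h y).tsum_sub (summable_mul_apply_inv_mul hS.memℓp h y)]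
  simp only [Pi.sub_apply, sub_mul]

theorem IsConvOp.tendsto_finConvOp (hT : IsConvOp u T) (h : ℓ²(G, ℂ)) :
    Tendsto (fun F => ⇑(finConvOp u F h)) atTop (𝓝 ⇑(T h)) := by
  refine tendsto_pi_nhds.2 fun y => ?_
  simp only [finConvOp_apply, hT h y]
  exact (summable_mul_apply_inv_mul hT.memℓp h y).hasSum

theorem IsConvOp.norm_le_of_forall_finConvOp_norm_le (hT : IsConvOp u T) {M : ℝ}
    (hM : ∀ F, ‖finConvOp u F‖ ≤ M) : ‖T‖ ≤ M :=
  T.opNorm_le_bound ((norm_nonneg _).trans (hM ∅)) fun h =>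
    lp.norm_le_of_tendsto (Eventually.of_forall fun F => (finConvOp u F).le_of_opNorm_le (hM F) h)
      (hT.tendsto_finConvOp h)

theorem IsConvOp.norm_le_of_forall_finset_sum_le (hT : IsConvOp u T) {C B : ℝ} (hC : 0 ≤ C)
    (hB : 0 ≤ B) (w : G → ℝ)
    (hfin : ∀ f : G → ℂ, (Function.support f).Finite → ∀ T, IsConvOp f T →
      ‖T‖ ≤ C * (∑' g, ‖f g‖ ^ 2 * w g) ^ ((1 : ℝ) / 2))
    (hsum : ∀ F : Finset G, ∑ g ∈ F, ‖u g‖ ^ 2 * w g ≤ B ^ 2) : ‖T‖ ≤ C * B := by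
  refine hT.norm_le_of_forall_finConvOp_norm_le fun F => ?_
  refine (hfin _ (F.finite_toSet.subset (Set.support_indicator_subset)) _
    (isConvOp_finConvOp u F)).trans ?_
  have hF : ∑' g, ‖(F : Set G).indicator u g‖ ^ 2 * w g = ∑ g ∈ F, ‖u g‖ ^ 2 * w g := by
    rw [tsum_eq_sum (s := F) fun g hg => by simp [hg]]
    exact Finset.sum_congr rfl fun g hg => by simp [hg]
  rw [hF, ← Real.sqrt_eq_rpow]
  gcongr
  exact Real.sqrt_le_iff.2 ⟨hB, hsum F⟩

end Convolution

section TailSupremum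

variable {a : ℕ → ℝ}

theorem le_iSup_tail (ha : BddAbove (Set.range a)) {n m : ℕ} (hm : n < m) :
    a m ≤ ⨆ m : {m : ℕ // n < m}, a m :=
  le_ciSup (ha.mono (Set.range_comp_subset_range Subtype.val a)) ⟨m, hm⟩

theorem tendsto_iSup_tail (ha₀ : ∀ m, 0 ≤ a m) (ha : Tendsto a atTop (𝓝 0)) :
    Tendsto (fun n => ⨆ m : {m : ℕ // n < m}, a m) atTop (𝓝 0) := by
  refine tendsto_order.2
    ⟨fun b hb => .of_forall fun n => hb.trans_le (Real.iSup_nonneg fun m => ha₀ m), fun ε hε => ?_⟩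
  obtain ⟨N, hN⟩ := eventually_atTop.1 ((tendsto_order.1 ha).2 (ε / 2) (half_pos hε))
  refine eventually_atTop.2 ⟨N, fun n hn => ?_⟩
  have : Nonempty {m : ℕ // n < m} := ⟨⟨n + 1, n.lt_succ_self⟩⟩
  refine lt_of_le_of_lt (ciSup_le fun m : {m : ℕ // n < m} => ?_) (half_lt_self hε)
  exact (hN m (hn.trans m.2.le)).le

end TailSupremum

theorem tendsto_exp_neg_mul_mul_one_add_pow {t : ℝ} (ht : 0 < t) (k : ℕ) :
    Tendsto (fun m : ℕ => Real.exp (-t * m) * (1 + (m : ℝ)) ^ k) atTop (𝓝 0) := by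
  have hr : |Real.exp (-t)| < 1 := by
    rw [abs_of_pos (Real.exp_pos _), Real.exp_lt_one_iff]; linarith
  have h := ((tendsto_add_atTop_iff_nat 1).2
    (tendsto_pow_const_mul_const_pow_of_abs_lt_one k hr)).const_mul (Real.exp t)
  rw [mul_zero] at h
  refine h.congr fun m => ?_
  rw [← Real.exp_nat_mul, mul_left_comm, ← Real.exp_add]
  push_cast
  ring_nf

theorem norm_truncation_error_mul_le {t : ℝ} (ht : 0 < t) (k n m : ℕ) (z : ℂ) :
    ‖(if m ≤ n then (Real.exp (-t * m) : ℂ) * z else 0) - Real.exp (-t * m) * z‖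
        * (1 + (m : ℝ)) ^ k ≤
      (⨆ m : {m : ℕ // n < m}, Real.exp (-t * m) * (1 + (m : ℝ)) ^ k) * ‖z‖ := by
  have hS : 0 ≤ ⨆ m : {m : ℕ // n < m}, Real.exp (-t * m) * (1 + (m : ℝ)) ^ k :=
    Real.iSup_nonneg fun _ => by positivity
  split_ifs with hm
  · simpa using mul_nonneg hS (norm_nonneg z)
  · have hle := le_iSup_tail (tendsto_exp_neg_mul_mul_one_add_pow ht k).bddAbove_range
      (not_le.1 hm)
    rw [zero_sub, norm_neg, norm_mul, Complex.norm_real, Real.norm_of_nonneg (Real.exp_pos _).le]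
    calc Real.exp (-t * m) * ‖z‖ * (1 + (m : ℝ)) ^ k
        = Real.exp (-t * m) * (1 + (m : ℝ)) ^ k * ‖z‖ := by ring
      _ ≤ _ := by gcongr

theorem stmt_10_general {G : Type*} [Group G]
    -- a length function on G
    (ℓ : G → ℕ)
    -- the Haagerup (rapid decay) inequality with constants C, k
    (C : ℝ) (hC : 0 < C) (k : ℕ)
    (haagerup : ∀ (f : G → ℂ), (Function.support f).Finite →
      ∀ T : lp (fun _ : G => ℂ) 2 →L[ℂ] lp (fun _ : G => ℂ) 2, IsConvOp f T →
      ‖T‖ ≤ C * (∑' g : G, ‖f g‖ ^ 2 * (1 + (ℓ g : ℝ)) ^ (2 * k)) ^ ((1 : ℝ) / 2))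
    (t : ℝ) (ht : 0 < t) (n : ℕ)
    (f : G → ℂ)
    (T Tt Tnt : lp (fun _ : G => ℂ) 2 →L[ℂ] lp (fun _ : G => ℂ) 2)
    (hT : IsConvOp f T)
    (hTt : IsConvOp (fun g => Real.exp (-t * ℓ g) * f g) Tt)
    (hTnt : IsConvOp (fun g => if ℓ g ≤ n then Real.exp (-t * ℓ g) * f g else 0) Tnt) :
    ‖Tnt - Tt‖ ≤
      C * (⨆ m : {m : ℕ // n < m}, Real.exp (-t * m) * (1 + (m : ℝ)) ^ k) * ‖T‖ ∧
    Tendsto (fun n : ℕ => ⨆ m : {m : ℕ // n < m}, Real.exp (-t * m) * (1 + (m : ℝ)) ^ k)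
      atTop (nhds 0) := by
  refine ⟨?_, tendsto_iSup_tail (fun _ => by positivity) (tendsto_exp_neg_mul_mul_one_add_pow ht k)⟩
  set S := ⨆ m : {m : ℕ // n < m}, Real.exp (-t * m) * (1 + (m : ℝ)) ^ k
  have hS : 0 ≤ S := Real.iSup_nonneg fun _ => by positivity
  rw [mul_assoc]
  refine (hTnt.sub hTt).norm_le_of_forall_finset_sum_le hC.le (by positivity) _ haagerup
    fun F => ?_
  calc ∑ g ∈ F, ‖(_ - _ : G → ℂ) g‖ ^ 2 * (1 + (ℓ g : ℝ)) ^ (2 * k)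
      ≤ ∑ g ∈ F, (S * ‖f g‖) ^ 2 := Finset.sum_le_sum fun g _ => by
        rw [pow_mul', ← mul_pow]
        exact pow_le_pow_left₀ (by positivity) (norm_truncation_error_mul_le ht k n (ℓ g) (f g)) 2
    _ = S ^ 2 * ∑ g ∈ F, ‖f g‖ ^ 2 := by simp only [mul_pow, Finset.mul_sum]
    _ ≤ (S * ‖T‖) ^ 2 := by rw [mul_pow]; gcongr; exact hT.sum_norm_sq_le F

theorem stmt_10 {G : Type*} [Group G]
    -- a length function on G
    (ℓ : G → ℕ) (hℓe : ℓ 1 = 0) (hℓinv : ∀ g : G, ℓ g⁻¹ = ℓ g)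
    (hℓsub : ∀ g h : G, ℓ (g * h) ≤ ℓ g + ℓ h)
    -- the Haagerup (rapid decay) inequality with constants C, k
    (C : ℝ) (hC : 0 < C) (k : ℕ)
    (haagerup : ∀ (f : G → ℂ), (Function.support f).Finite →
      ∀ T : lp (fun _ : G => ℂ) 2 →L[ℂ] lp (fun _ : G => ℂ) 2, IsConvOp f T →
      ‖T‖ ≤ C * (∑' g : G, ‖f g‖ ^ 2 * (1 + (ℓ g : ℝ)) ^ (2 * k)) ^ ((1 : ℝ) / 2))
    (t : ℝ) (ht : 0 < t) (n : ℕ)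
    (f : G → ℂ)
    (T Tt Tnt : lp (fun _ : G => ℂ) 2 →L[ℂ] lp (fun _ : G => ℂ) 2)
    (hT : IsConvOp f T)
    (hTt : IsConvOp (fun g => Real.exp (-t * ℓ g) * f g) Tt)
    (hTnt : IsConvOp (fun g => if ℓ g ≤ n then Real.exp (-t * ℓ g) * f g else 0) Tnt) :
    ‖Tnt - Tt‖ ≤
      C * (⨆ m : {m : ℕ // n < m}, Real.exp (-t * m) * (1 + (m : ℝ)) ^ k) * ‖T‖ ∧
    Tendsto (fun n : ℕ => ⨆ m : {m : ℕ // n < m}, Real.exp (-t * m) * (1 + (m : ℝ)) ^ k)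
      atTop (nhds 0) :=
  stmt_10_general ℓ C hC k haagerup t ht n f T Tt Tnt hT hTt hTnt
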